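/- arXiv:2409.04045 — 5 statements merged into one kernel-verified Lean document; each statement's English description precedes it below -/
import Mathlib

section
/- Let h : F_q → F_q with h(0) = 0. Then the set H = {x/(x-y) : x, y ∈ F_q, h(x) ≠ 0, h(y) = 0} is contained in D_h^{-1} D_h, where D_h is the direction set of h, D_h^{-1} = {d^{-1} : d ∈ D_h, d ≠ 0}, and D_h^{-1} D_h is the set of products. -/
open Pointwise

variable {F : Type*} [Field F] [Fintype F]

/-- The set of directions determined by the graph of `f`. -/
def dirs (f : F → F) : Set F := {d | ∃ x y : F, x ≠ y ∧ d = (f x - f y) / (x - y)}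

/-- The set of inverses of the nonzero elements of `A`. -/
def invSet (A : Set F) : Set F := {b | ∃ a ∈ A, a ≠ 0 ∧ b = a⁻¹}

/-! With `h y = 0`, `x / (x - y) = (h x / x)⁻¹ * ((h x - h y) / (x - y))`, and `h x / x` is the
(nonzero) direction of the chord from the origin to `(x, h x)`. -/

section

variable {K : Type*} [Field K]

theorem slope_mem_dirs (f : K → K) {x y : K} (hxy : x ≠ y) :
    (f x - f y) / (x - y) ∈ dirs f :=
  ⟨x, y, hxy, rfl⟩

theorem inv_mem_invSet {A : Set K} {a : K} (ha : a ∈ A) (ha0 : a ≠ 0) :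
    a⁻¹ ∈ invSet A :=
  ⟨a, ha, ha0, rfl⟩

theorem div_sub_eq_inv_div_mul_div {x y a : K} (ha : a ≠ 0) :
    x / (x - y) = (a / x)⁻¹ * (a / (x - y)) := by
  rw [inv_div, div_mul_div_comm, mul_comm x a, mul_div_mul_left _ _ ha]

end

theorem stmt1 (h : F → F) (h0 : h 0 = 0) :
    {z : F | ∃ x y : F, h x ≠ 0 ∧ h y = 0 ∧ z = x / (x - y)} ⊆
      invSet (dirs h) * dirs h := by
  rintro z ⟨x, y, hx, hy, rfl⟩
  have hx0 : x ≠ 0 := fun e => hx (e ▸ h0)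
  have hxy : x ≠ y := fun e => hx (e ▸ hy)
  have hslope : h x / x ∈ dirs h := by
    simpa only [h0, sub_zero] using slope_mem_dirs h hx0
  have hchord : h x / (x - y) ∈ dirs h := by
    simpa only [hy, sub_zero] using slope_mem_dirs h hxy
  exact ⟨(h x / x)⁻¹, inv_mem_invSet hslope (div_ne_zero hx hx0), h x / (x - y), hchord,
    (div_sub_eq_inv_div_mul_div hx).symm⟩
end

section
/- Let h : F_q → F_q be a function having exactly k distinct roots (values x with h(x) = 0) for some 1 < k < q, with 0 among the roots. Then the set H = {x/(x-y) : x, y ∈ F_q, h(x) ≠ 0, h(y) = 0} has size at least q - k + 1. -/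
open Pointwise

variable {F : Type*} [Field F] [Fintype F]

theorem stmt3 (h : F → F) (k : ℕ) (hk1 : 1 < k) (hkq : k < Fintype.card F)
    (hroots : {x : F | h x = 0}.ncard = k) (h0 : h 0 = 0) :
    Fintype.card F - k + 1 ≤
      {z : F | ∃ x y : F, h x ≠ 0 ∧ h y = 0 ∧ z = x / (x - y)}.ncard := by
  classical
  set R : Set F := {x : F | h x = 0} with hR
  set N : Set F := {x : F | h x ≠ 0} with hN
  have hNcompl : N = Rᶜ := rfl
  have hNcard : N.ncard = Fintype.card F - k := by
    have := Set.ncard_add_ncard_compl R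
    rw [← hNcompl, hroots] at this
    have hcard : Nat.card F = Fintype.card F := Nat.card_eq_fintype_card
    omega
  obtain ⟨y₀, hy₀R, hy₀ne⟩ : ∃ y₀ ∈ R, y₀ ≠ 0 := by
    by_contra hc
    push_neg at hc
    have hsub : R ⊆ {0} := fun x hx => hc x hx
    have := Set.ncard_le_ncard hsub (Set.finite_singleton 0)
    simp [hroots] at this
    omega
  obtain ⟨x₀, hx₀⟩ : N.Nonempty := by
    rw [← Set.ncard_pos]
    omega
  set f : F → F := fun x => x / (x - y₀) with hf
  set T : Set F := insert 1 (f '' N) with hT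
  have hsub : T ⊆ {z : F | ∃ x y : F, h x ≠ 0 ∧ h y = 0 ∧ z = x / (x - y)} := by
    intro z hz
    rcases hz with hz | ⟨x, hx, rfl⟩
    · refine ⟨x₀, 0, hx₀, h0, ?_⟩
      have hx₀ne : x₀ ≠ 0 := by
        intro hh; rw [hN, Set.mem_setOf_eq, hh] at hx₀; exact hx₀ h0
      simp [hz, hx₀ne]
    · exact ⟨x, y₀, hx, hy₀R, rfl⟩
  have hxney : ∀ x ∈ N, x - y₀ ≠ 0 := by
    intro x hx hxy
    have : x = y₀ := by linear_combination hxy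
    rw [hN, Set.mem_setOf_eq, this] at hx
    exact hx hy₀R
  have hinj : Set.InjOn f N := by
    intro a ha b hb hab
    have ha' := hxney a ha
    have hb' := hxney b hb
    rw [hf] at hab
    simp only at hab
    rw [div_eq_div_iff ha' hb'] at hab
    have : a * y₀ = b * y₀ := by ring_nf at hab ⊢; linear_combination -hab
    exact mul_right_cancel₀ hy₀ne this
  have h1not : (1 : F) ∉ f '' N := by
    rintro ⟨x, hx, hfx⟩
    have hx' := hxney x hx
    rw [hf] at hfx
    simp only at hfx
    rw [div_eq_one_iff_eq hx'] at hfx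
    exact hy₀ne (by linear_combination hfx)
  have hTfin : T.Finite := Set.toFinite T
  have hTcard : T.ncard = Fintype.card F - k + 1 := by
    rw [hT, Set.ncard_insert_of_notMem h1not (Set.toFinite _),
      Set.ncard_image_of_injOn hinj, hNcard]
  calc Fintype.card F - k + 1 = T.ncard := hTcard.symm
    _ ≤ _ := Set.ncard_le_ncard hsub (Set.toFinite _)
end

section
/- Let f : F_q → F_q and suppose the line y = mx + b meets the graph {(x, f(x)) : x ∈ F_q} in exactly k points for some 1 < k < q. Then |(D_f - m)^{-1}(D_f - m)| ≥ q - k + 2, where D_f is the direction set of f. -/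
open Pointwise

variable {F : Type*} [Field F] [Fintype F]

/-!
Pick two points `x₁ ≠ x₂` on the line `y = mx + b`. For `y` off the line put
`c = my + b - f y ≠ 0`; the shifted slope from `(xᵢ, f xᵢ)` to `(y, f y)` is `c / (xᵢ - y)`,
a nonzero element of `D_f - m`. The quotient of the two is `(x₁ - y) / (x₂ - y)`, an injective
function of `y` missing `0` and `1`. Together with `0` (the line's own direction shifted by `m`)
and `1 = a⁻¹ a`, this gives `q - k + 2` distinct elements of `(D_f - m)⁻¹ (D_f - m)`.
-/

section Quotients

variable {K : Type*} [Field K]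

theorem inv_mul_mem_invSet_mul {A : Set K} {a c : K} (ha : a ∈ A) (ha0 : a ≠ 0) (hc : c ∈ A) :
    a⁻¹ * c ∈ invSet A * A :=
  Set.mul_mem_mul ⟨a, ha, ha0, rfl⟩ hc

theorem zero_mem_invSet_mul {A : Set K} {a : K} (ha : a ∈ A) (ha0 : a ≠ 0)
    (h0 : (0 : K) ∈ A) :
    (0 : K) ∈ invSet A * A := by
  simpa using inv_mul_mem_invSet_mul ha ha0 h0

theorem one_mem_invSet_mul {A : Set K} {a : K} (ha : a ∈ A) (ha0 : a ≠ 0) :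
    (1 : K) ∈ invSet A * A := by
  simpa [ha0] using inv_mul_mem_invSet_mul ha ha0 ha

end Quotients

section Moebius

variable {K : Type*} [Field K] {u v : K}

theorem injOn_sub_div_sub (huv : u ≠ v) :
    Set.InjOn (fun y => (u - y) / (v - y)) {y | y ≠ v} := by
  intro y hy z hz hyz
  rw [div_eq_div_iff (sub_ne_zero.2 (Ne.symm hy)) (sub_ne_zero.2 (Ne.symm hz))] at hyz
  have : (u - v) * (y - z) = 0 := by linear_combination hyz
  simpa [sub_eq_zero, huv] using this

theorem ncard_insert_zero_insert_one_image_sub_div_sub {s : Set K} (hs : s.Finite)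
    (huv : u ≠ v) (hu : u ∉ s) (hv : v ∉ s) :
    (insert 0 (insert 1 ((fun y => (u - y) / (v - y)) '' s))).ncard = s.ncard + 2 := by
  have hv' : ∀ y ∈ s, v - y ≠ 0 := fun y hy h => hv (sub_eq_zero.1 h ▸ hy)
  have hu' : ∀ y ∈ s, u - y ≠ 0 := fun y hy h => hu (sub_eq_zero.1 h ▸ hy)
  have h1 : (1 : K) ∉ (fun y => (u - y) / (v - y)) '' s := by
    rintro ⟨y, hy, hy1⟩
    rw [div_eq_one_iff_eq (hv' y hy)] at hy1
    exact huv (sub_left_inj.1 hy1)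
  have h0 : (0 : K) ∉ insert 1 ((fun y => (u - y) / (v - y)) '' s) := by
    rintro (h | ⟨y, hy, hy0⟩)
    · exact one_ne_zero h.symm
    · exact div_ne_zero (hu' y hy) (hv' y hy) hy0
  have hinj : Set.InjOn (fun y => (u - y) / (v - y)) s :=
    (injOn_sub_div_sub huv).mono fun y hy (h : y = v) => hv (h ▸ hy)
  rw [Set.ncard_insert_of_notMem h0 ((hs.image _).insert 1),
    Set.ncard_insert_of_notMem h1 (hs.image _), hinj.ncard_image]

end Moebius

section Directions

variable {K : Type*} [Field K] {f : K → K} {m b x y : K}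

theorem zero_mem_image_dirs_of_mem_line {x' : K} (hx : f x = m * x + b) (hx' : f x' = m * x' + b)
    (hxx' : x ≠ x') : (0 : K) ∈ (fun d => d - m) '' dirs f := by
  refine ⟨_, ⟨x, x', hxx', rfl⟩, ?_⟩
  rw [hx, hx', sub_eq_zero, div_eq_iff (sub_ne_zero.2 hxx')]
  ring

theorem div_mem_image_dirs_of_mem_line (hx : f x = m * x + b) (hy : f y ≠ m * y + b) :
    (m * y + b - f y) / (x - y) ∈ (fun d => d - m) '' dirs f := by
  have hxy : x - y ≠ 0 := sub_ne_zero.2 fun h => hy (h ▸ hx)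
  refine ⟨_, ⟨x, y, sub_ne_zero.1 hxy, rfl⟩, ?_⟩
  rw [eq_div_iff hxy, sub_mul, div_mul_cancel₀ _ hxy, hx]
  ring

theorem div_ne_zero_of_mem_line (hx : f x = m * x + b) (hy : f y ≠ m * y + b) :
    (m * y + b - f y) / (x - y) ≠ 0 :=
  div_ne_zero (fun h => hy (by linear_combination -h))
    (sub_ne_zero.2 fun h => hy (h ▸ hx))

theorem sub_div_sub_mem_invSet_mul {x' : K} (hx : f x = m * x + b) (hx' : f x' = m * x' + b)
    (hy : f y ≠ m * y + b) :
    (x - y) / (x' - y) ∈ invSet ((fun d => d - m) '' dirs f) * ((fun d => d - m) '' dirs f) := by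
  convert inv_mul_mem_invSet_mul (div_mem_image_dirs_of_mem_line hx hy)
    (div_ne_zero_of_mem_line hx hy) (div_mem_image_dirs_of_mem_line hx' hy) using 1
  have hc : m * y + b - f y ≠ 0 := fun h => hy (by linear_combination -h)
  rw [inv_div, div_mul_div_cancel₀ hc]

end Directions

theorem stmt4 (f : F → F) (m b : F) (k : ℕ) (hk1 : 1 < k) (hkq : k < Fintype.card F)
    (hmeet : {x : F | f x = m * x + b}.ncard = k) :
    Fintype.card F - k + 2 ≤
      (invSet ((fun d => d - m) '' dirs f) * ((fun d => d - m) '' dirs f)).ncard := by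
  set S : Set F := {x | f x = m * x + b}
  obtain ⟨x₁, x₂, hx₁, hx₂, hx₁₂⟩ :=
    (Set.one_lt_ncard_iff S.toFinite).1 (hmeet ▸ hk1)
  have hcompl : Sᶜ.ncard = Fintype.card F - k := by
    have := Set.ncard_add_ncard_compl S
    rw [hmeet, Nat.card_eq_fintype_card] at this
    omega
  obtain ⟨y₀, hy₀⟩ : Sᶜ.Nonempty := by
    rw [← Set.ncard_pos, hcompl]
    omega
  have hsub : insert 0 (insert 1 ((fun y => (x₁ - y) / (x₂ - y)) '' Sᶜ)) ⊆
      invSet ((fun d => d - m) '' dirs f) * ((fun d => d - m) '' dirs f) := by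
    have hE₀ := div_mem_image_dirs_of_mem_line (x := x₁) hx₁ hy₀
    have hE₀ne := div_ne_zero_of_mem_line (x := x₁) hx₁ hy₀
    rintro t (rfl | rfl | ⟨y, hy, rfl⟩)
    · exact zero_mem_invSet_mul hE₀ hE₀ne
        (zero_mem_image_dirs_of_mem_line hx₁ hx₂ hx₁₂)
    · exact one_mem_invSet_mul hE₀ hE₀ne
    · exact sub_div_sub_mem_invSet_mul hx₁ hx₂ hy
  calc Fintype.card F - k + 2
      = (insert 0 (insert 1 ((fun y => (x₁ - y) / (x₂ - y)) '' Sᶜ))).ncard := by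
        rw [ncard_insert_zero_insert_one_image_sub_div_sub Sᶜ.toFinite hx₁₂
          (fun h => h hx₁) (fun h => h hx₂), hcompl]
    _ ≤ _ := Set.ncard_le_ncard hsub
end

section
/- If f : F_q → F_q is a non-constant function with |D_f^{-1} D_f| ≤ (q+1)/2, then f is a permutation of F_q. -/
/-!
Suppose `f` is not injective, say `f x = f y` with `x ≠ y`, and let `T` be the level set of `f`
through `x` and `U ≠ ∅` its complement. Whenever `f z ≠ f a = f b` and `z ≠ b`, dividing the
directions of the secants `za` and `zb` gives `(z - a) / (z - b) ∈ D_f⁻¹ D_f`; this set also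
contains `0` and `1`. Fixing `z ∈ U` and letting `a` run over `T` produces `|T|` distinct
nonzero such quotients, while fixing `a = x`, `b = y` and letting `z` run over `U` produces
`|U|` distinct ones different from `0` and `1`. Hence `2 |D_f⁻¹ D_f| ≥ (|T| + 1) + (|U| + 2) = q + 3`.
-/

open Pointwise

variable {F : Type*} [Field F] [Fintype F]

section

variable {K : Type*} [Field K]

lemma div_sub_injective_of_ne {z x : K} (hzx : z ≠ x) :
    Function.Injective fun a : K => (z - a) / (z - x) := by
  intro a b hab
  simpa [div_left_inj' (sub_ne_zero.mpr hzx)] using hab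

lemma sub_div_sub_injOn {x y : K} (hxy : x ≠ y) :
    Set.InjOn (fun z : K => (z - x) / (z - y)) {z | z ≠ y} := by
  intro z hz w hw hzw
  have hzy : z - y ≠ 0 := sub_ne_zero.mpr hz
  have hwy : w - y ≠ 0 := sub_ne_zero.mpr hw
  have h := (div_eq_div_iff hzy hwy).mp hzw
  have hprod : (z - w) * (x - y) = 0 := by linear_combination h
  exact sub_eq_zero.mp ((mul_eq_zero.mp hprod).resolve_right (sub_ne_zero.mpr hxy))

lemma inv_mul_mem_invSet_mul_dirs (f : K → K) {d e : K} (hd : d ∈ dirs f) (hd0 : d ≠ 0)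
    (he : e ∈ dirs f) : d⁻¹ * e ∈ invSet (dirs f) * dirs f :=
  Set.mul_mem_mul ⟨d, hd, hd0, rfl⟩ he

lemma sub_div_sub_mem_invSet_mul_dirs (f : K → K) {z a b : K} (hza : f z ≠ f a)
    (hab : f a = f b) (hzb : z ≠ b) : (z - a) / (z - b) ∈ invSet (dirs f) * dirs f := by
  have hzan : z - a ≠ 0 := sub_ne_zero.mpr fun h => hza (by rw [h])
  have hfza : f z - f a ≠ 0 := sub_ne_zero.mpr hza
  convert inv_mul_mem_invSet_mul_dirs f ⟨z, a, sub_ne_zero.mp hzan, rfl⟩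
    (div_ne_zero hfza hzan) ⟨z, b, hzb, rfl⟩ using 1
  rw [← hab]
  field_simp

lemma one_mem_invSet_mul_dirs (f : K → K) {z a : K} (hza : f z ≠ f a) :
    (1 : K) ∈ invSet (dirs f) * dirs f := by
  have hza' : z ≠ a := fun h => hza (by rw [h])
  simpa [sub_ne_zero.mpr hza'] using sub_div_sub_mem_invSet_mul_dirs f hza rfl hza'

lemma zero_mem_invSet_mul_dirs (f : K → K) {x y z : K} (hxy : x ≠ y) (hfxy : f x = f y)
    (hz : f z ≠ f x) : (0 : K) ∈ invSet (dirs f) * dirs f := by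
  have hzx : z ≠ x := fun h => hz (by rw [h])
  have hd0 : (f z - f x) / (z - x) ≠ 0 := div_ne_zero (sub_ne_zero.mpr hz) (sub_ne_zero.mpr hzx)
  have h := inv_mul_mem_invSet_mul_dirs f ⟨z, x, hzx, rfl⟩ hd0
    ⟨x, y, hxy, by rw [hfxy, sub_self, zero_div]⟩
  rwa [mul_zero] at h

end

section

variable {K : Type*} [Field K] [Finite K]

lemma ncard_level_add_one_le (f : K → K) {x y z : K} (hxy : x ≠ y) (hfxy : f x = f y)
    (hz : f z ≠ f x) : {a | f a = f x}.ncard + 1 ≤ (invSet (dirs f) * dirs f).ncard := by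
  have hzx : z ≠ x := fun h => hz (by rw [h])
  have hsub : insert 0 ((fun a => (z - a) / (z - x)) '' {a | f a = f x}) ⊆
      invSet (dirs f) * dirs f := by
    rintro _ (rfl | ⟨a, ha, rfl⟩)
    · exact zero_mem_invSet_mul_dirs f hxy hfxy hz
    · exact sub_div_sub_mem_invSet_mul_dirs f (ha.symm ▸ hz) ha hzx
  have h0 : (0 : K) ∉ (fun a => (z - a) / (z - x)) '' {a | f a = f x} := by
    rintro ⟨a, ha, h⟩
    rcases div_eq_zero_iff.mp h with h | h
    · exact hz (sub_eq_zero.mp h ▸ ha)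
    · exact hzx (sub_eq_zero.mp h)
  calc {a | f a = f x}.ncard + 1
      = (insert 0 ((fun a => (z - a) / (z - x)) '' {a | f a = f x})).ncard := by
        rw [Set.ncard_insert_of_notMem h0, Set.ncard_image_of_injective _
          (div_sub_injective_of_ne hzx)]
    _ ≤ _ := Set.ncard_le_ncard hsub

lemma ncard_compl_level_add_two_le (f : K → K) {x y z : K} (hxy : x ≠ y) (hfxy : f x = f y)
    (hz : f z ≠ f x) : {a | f a = f x}ᶜ.ncard + 2 ≤ (invSet (dirs f) * dirs f).ncard := by
  have hx : x ∈ {a | f a = f x} := rfl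
  have hy : y ∈ {a | f a = f x} := hfxy.symm
  have hinj : Set.InjOn (fun w => (w - x) / (w - y)) {a | f a = f x}ᶜ :=
    (sub_div_sub_injOn hxy).mono fun w (hw : f w ≠ f x) (h : w = y) => hw (h ▸ hy)
  have hsub : insert 0 (insert 1 ((fun w => (w - x) / (w - y)) '' {a | f a = f x}ᶜ)) ⊆
      invSet (dirs f) * dirs f := by
    rintro _ (rfl | rfl | ⟨w, hw, rfl⟩)
    · exact zero_mem_invSet_mul_dirs f hxy hfxy hz
    · exact one_mem_invSet_mul_dirs f hz
    · exact sub_div_sub_mem_invSet_mul_dirs f hw hfxy fun h => hw (h ▸ hy)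
  have h1 : (1 : K) ∉ (fun w => (w - x) / (w - y)) '' {a | f a = f x}ᶜ := by
    rintro ⟨w, hw, h⟩
    have hwy : w - y ≠ 0 := sub_ne_zero.mpr fun h => hw (h ▸ hy)
    exact hxy (by linear_combination -(div_eq_one_iff_eq hwy).mp h)
  have h0 : (0 : K) ∉ insert 1 ((fun w => (w - x) / (w - y)) '' {a | f a = f x}ᶜ) := by
    rintro (h | ⟨w, hw, h⟩)
    · exact zero_ne_one h
    rcases div_eq_zero_iff.mp h with h | h
    · exact hw (sub_eq_zero.mp h ▸ hx)
    · exact hw (sub_eq_zero.mp h ▸ hy)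
  calc {a | f a = f x}ᶜ.ncard + 2
      = (insert 0 (insert 1 ((fun w => (w - x) / (w - y)) '' {a | f a = f x}ᶜ))).ncard := by
        rw [Set.ncard_insert_of_notMem h0, Set.ncard_insert_of_notMem h1,
          hinj.ncard_image]
    _ ≤ _ := Set.ncard_le_ncard hsub

end

theorem stmt7 (f : F → F) (hnc : ¬ ∃ c : F, ∀ x, f x = c)
    (hsize : (invSet (dirs f) * dirs f).ncard ≤ (Fintype.card F + 1) / 2) :
    Function.Bijective f := by
  rw [← Finite.injective_iff_bijective]
  by_contra hinj
  obtain ⟨x, y, hfxy, hxy⟩ := Function.not_injective_iff.mp hinj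
  obtain ⟨z, hz⟩ := not_forall.mp (not_exists.mp hnc (f x))
  have hT := ncard_level_add_one_le f hxy hfxy hz
  have hU := ncard_compl_level_add_two_le f hxy hfxy hz
  have hq := Set.ncard_add_ncard_compl {a | f a = f x}
  rw [Nat.card_eq_fintype_card] at hq
  omega
end

section
/- Let d > 1 divide q - 1 and let M_d = {x^d : x ∈ F_q^×}. If f : F_q → F_q satisfies D_f ⊆ M_d ∪ {0}, then |D_f^{-1} D_f| ≤ (q+1)/2. -/
open Pointwise

variable {F : Type*} [Field F] [Fintype F]

theorem stmt9 (d : ℕ) (hd1 : 1 < d) (hdvd : d ∣ Fintype.card F - 1)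
    (f : F → F)
    (hD : dirs f ⊆ {y : F | ∃ x : F, x ≠ 0 ∧ y = x ^ d} ∪ {0}) :
    (invSet (dirs f) * dirs f).ncard ≤ (Fintype.card F + 1) / 2 := by
  classical
  set S : Set F := {y : F | ∃ x : F, x ≠ 0 ∧ y = x ^ d} with hS
  -- Step 1: the product set is contained in S ∪ {0}
  have hsub : invSet (dirs f) * dirs f ⊆ S ∪ {0} := by
    rintro z hz
    rw [Set.mem_mul] at hz
    obtain ⟨a, ha, b, hb, rfl⟩ := hz
    obtain ⟨e, he, hene, rfl⟩ := ha
    obtain ⟨x, hx, rfl⟩ | he0 := hD he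
    · rcases hD hb with ⟨y, hy, rfl⟩ | hb0
      · left
        exact ⟨x⁻¹ * y, by simp [hx, hy], by rw [mul_pow, inv_pow]⟩
      · right
        simp at hb0
        simp [hb0]
    · exact absurd he0 hene
  -- Step 2: find a nontrivial d-th root of unity
  have hq1 : 0 < Fintype.card F := Fintype.card_pos
  haveI : Fact (Nat.Prime d.minFac) := ⟨Nat.minFac_prime (by omega)⟩
  obtain ⟨u, hu⟩ := exists_prime_orderOf_dvd_card (G := Fˣ) d.minFac
    (by
      rw [Fintype.card_units]
      exact dvd_trans (Nat.minFac_dvd d) hdvd)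
  have hζd : (u : F) ^ d = 1 := by
    have : u ^ d = 1 := orderOf_dvd_iff_pow_eq_one.mp (hu ▸ Nat.minFac_dvd d)
    simpa using congrArg Units.val this
  have hζ1 : (u : F) ≠ 1 := by
    intro h
    have hu1 : u = 1 := Units.ext (by simpa using h)
    have hlt := (Nat.minFac_prime (show d ≠ 1 by omega)).one_lt
    rw [hu1, orderOf_one] at hu
    omega
  have hζ0 : (u : F) ≠ 0 := Units.ne_zero u
  -- Step 3: bound |S|
  have hScard : 2 * S.ncard ≤ Fintype.card F - 1 := by
    have hSeq : S = ↑((Finset.univ.filter (fun x : F => x ≠ 0)).image (· ^ d)) := by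
      ext y
      simp [hS, eq_comm]
    rw [hSeq, Set.ncard_coe_finset]
    have := Finset.mul_card_image_le_card (f := (· ^ d))
      (Finset.univ.filter (fun x : F => x ≠ 0)) 2 ?_
    · calc 2 * ((Finset.univ.filter (fun x : F => x ≠ 0)).image (· ^ d)).card
          ≤ (Finset.univ.filter (fun x : F => x ≠ 0)).card := this
        _ = Fintype.card F - 1 := by
            rw [Finset.filter_ne']
            rw [Finset.card_erase_of_mem (Finset.mem_univ 0), Finset.card_univ]
    · intro b hb
      obtain ⟨x, hx, rfl⟩ := Finset.mem_image.mp hb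
      simp only [Finset.mem_filter, Finset.mem_univ, true_and] at hx
      have h1 : x ∈ {a ∈ Finset.univ.filter (fun x : F => x ≠ 0) | a ^ d = x ^ d} := by
        simp [hx]
      have h2 : (u : F) * x ∈
          {a ∈ Finset.univ.filter (fun x : F => x ≠ 0) | a ^ d = x ^ d} := by
        simp [hx, hζ0, mul_pow, hζd]
      have hne : x ≠ (u : F) * x := by
        intro h
        apply hζ1
        have h2 : (1 : F) * x = (u : F) * x := by rw [one_mul]; exact h
        exact (mul_right_cancel₀ hx h2).symm
      exact Finset.one_lt_card.mpr ⟨x, h1, (u : F) * x, h2, hne⟩ 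
  -- Conclude
  have h1 : (invSet (dirs f) * dirs f).ncard ≤ S.ncard + 1 := by
    calc (invSet (dirs f) * dirs f).ncard ≤ (S ∪ {0}).ncard :=
          Set.ncard_le_ncard hsub (Set.toFinite _)
      _ ≤ S.ncard + ({0} : Set F).ncard := Set.ncard_union_le _ _
      _ = S.ncard + 1 := by rw [Set.ncard_singleton]
  have h2 : S.ncard ≤ (Fintype.card F - 1) / 2 := Nat.le_div_iff_mul_le (by norm_num) |>.mpr
    (by omega)
  omega
end
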